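/- Let μ > 0 and λ ∈ ℝ with λ + μ > 0, and κ := (λ+3μ)/(λ+μ). For every k ∈ ℕ, the displacement field u(x) := r^{k/2} φ_k(θ), defined on the slit plane ℝ² \ {(t,0) : t ≤ 0} via r := |x| and θ := arg(x₁ + i x₂) ∈ (−π, π), is smooth there and satisfies Navier's equation μΔu + (λ+μ)∇(∇·u) = 0 on the slit plane. -/

import Mathlib

/-- The angular function `φ_k`. -/
noncomputable def phik (κ : ℝ) (k : ℕ) (θ : ℝ) : ℝ × ℝ :=
  (κ * Real.cos ((k : ℝ) * θ / 2) - ((k : ℝ) / 2) * Real.cos (((k : ℝ) / 2 - 2) * θ)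
      + ((k : ℝ) / 2 + (-1 : ℝ) ^ k) * Real.cos ((k : ℝ) * θ / 2),
   κ * Real.sin ((k : ℝ) * θ / 2) + ((k : ℝ) / 2) * Real.sin (((k : ℝ) / 2 - 2) * θ)
      - ((k : ℝ) / 2 + (-1 : ℝ) ^ k) * Real.sin ((k : ℝ) * θ / 2))

/-- The slit plane `ℝ² \ {(t,0) : t ≤ 0}`. -/
def slitSet : Set (ℝ × ℝ) := {p : ℝ × ℝ | ¬(p.2 = 0 ∧ p.1 ≤ 0)}

/-- The displacement field `u(x) = r^{k/2} φ_k(θ)` in polar coordinates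
`r = |x|`, `θ = arg(x₁ + i x₂) ∈ (−π, π)`. -/
noncomputable def uphi (κ : ℝ) (k : ℕ) (p : ℝ × ℝ) : ℝ × ℝ :=
  (Real.sqrt (p.1 ^ 2 + p.2 ^ 2) ^ ((k : ℝ) / 2))
    • phik κ k (Complex.arg ((p.1 : ℂ) + (p.2 : ℂ) * Complex.I))

/-- Partial derivative with respect to the first variable. -/
noncomputable def pd1R (f : ℝ × ℝ → ℝ) (p : ℝ × ℝ) : ℝ := fderiv ℝ f p (1, 0)

/-- Partial derivative with respect to the second variable. -/
noncomputable def pd2R (f : ℝ × ℝ → ℝ) (p : ℝ × ℝ) : ℝ := fderiv ℝ f p (0, 1)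

/-- Divergence of a planar field. -/
noncomputable def divR (u : ℝ × ℝ → ℝ × ℝ) (p : ℝ × ℝ) : ℝ :=
  pd1R (fun q => (u q).1) p + pd2R (fun q => (u q).2) p

open Complex ComplexConjugate Set Filter Topology

/-!
Writing `U = u₁ + i u₂` and `z = x₁ + i x₂`, the field is
`U = κ φ(z) - z · conj (φ' z) + conj (ψ z)` with `φ z = z ^ (k/2)` and
`ψ z = (k/2 + (-1)^k) z ^ (k/2)`, a Kolosov–Muskhelishvili representation.
For holomorphic `A, B, C` the class of fields `A z + z · conj (B z) + conj (C z)` is stable under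
real directional derivatives: `∂ᵥ` acts by `A ↦ v A'`, `B ↦ v B'`, `C ↦ conj v · B + v C'`.
Hence `ΔU = 4 conj B'` and `∇ · u = 2 Re (A' + B)`, so Navier's equation becomes the holomorphic
identity `2μ B' + (λ + μ)(A'' + B') = 0`; for `A = κ φ`, `B = -φ'` it is `(λ + μ)(κ - 1) = 2μ`,
which is the definition of `κ`.
-/

def IsNavierSolutionOn (μ lam : ℝ) (u : ℝ × ℝ → ℝ × ℝ) (T : Set (ℝ × ℝ)) : Prop :=
  ∀ p ∈ T,
    (μ * (pd1R (pd1R (fun q => (u q).1)) p + pd2R (pd2R (fun q => (u q).1)) p)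
      + (lam + μ) * pd1R (divR u) p = 0) ∧
    (μ * (pd1R (pd1R (fun q => (u q).2)) p + pd2R (pd2R (fun q => (u q).2)) p)
      + (lam + μ) * pd2R (divR u) p = 0)

section Congr
variable {T : Set (ℝ × ℝ)}

lemma eqOn_pd1R {f g : ℝ × ℝ → ℝ} (h : EqOn f g T) (hT : IsOpen T) :
    EqOn (pd1R f) (pd1R g) T := fun p hp => by
  rw [pd1R, pd1R, (eventuallyEq_of_mem (hT.mem_nhds hp) h).fderiv_eq]

lemma eqOn_pd2R {f g : ℝ × ℝ → ℝ} (h : EqOn f g T) (hT : IsOpen T) :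
    EqOn (pd2R f) (pd2R g) T := fun p hp => by
  rw [pd2R, pd2R, (eventuallyEq_of_mem (hT.mem_nhds hp) h).fderiv_eq]

lemma eqOn_divR {u v : ℝ × ℝ → ℝ × ℝ} (h : EqOn u v T) (hT : IsOpen T) :
    EqOn (divR u) (divR v) T := fun p hp => by
  have h1 : EqOn (fun q => (u q).1) (fun q => (v q).1) T := fun q hq => congrArg Prod.fst (h hq)
  have h2 : EqOn (fun q => (u q).2) (fun q => (v q).2) T := fun q hq => congrArg Prod.snd (h hq)
  rw [divR, divR, eqOn_pd1R h1 hT hp, eqOn_pd2R h2 hT hp]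

lemma IsNavierSolutionOn.congr {μ lam : ℝ} {u v : ℝ × ℝ → ℝ × ℝ}
    (hu : IsNavierSolutionOn μ lam u T) (h : EqOn u v T) (hT : IsOpen T) :
    IsNavierSolutionOn μ lam v T := by
  have h1 : EqOn (fun q => (u q).1) (fun q => (v q).1) T := fun q hq => congrArg Prod.fst (h hq)
  have h2 : EqOn (fun q => (u q).2) (fun q => (v q).2) T := fun q hq => congrArg Prod.snd (h hq)
  intro p hp
  rw [← eqOn_pd1R (eqOn_pd1R h1 hT) hT hp, ← eqOn_pd2R (eqOn_pd2R h1 hT) hT hp,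
    ← eqOn_pd1R (eqOn_pd1R h2 hT) hT hp, ← eqOn_pd2R (eqOn_pd2R h2 hT) hT hp,
    ← eqOn_pd1R (eqOn_divR h hT) hT hp, ← eqOn_pd2R (eqOn_divR h hT) hT hp]
  exact hu p hp

end Congr

noncomputable def planeField (F : ℂ → ℂ) : ℝ × ℝ → ℝ × ℝ :=
  equivRealProdCLM ∘ F ∘ equivRealProdCLM.symm

lemma pd1R_comp_equivRealProd (g : ℂ → ℝ) :
    pd1R (g ∘ equivRealProdCLM.symm) = (fun z => fderiv ℝ g z 1) ∘ equivRealProdCLM.symm := by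
  ext p; simp [pd1R, ContinuousLinearEquiv.comp_right_fderiv, equivRealProdCLM_symm_apply]

lemma pd2R_comp_equivRealProd (g : ℂ → ℝ) :
    pd2R (g ∘ equivRealProdCLM.symm) = (fun z => fderiv ℝ g z I) ∘ equivRealProdCLM.symm := by
  ext p; simp [pd2R, ContinuousLinearEquiv.comp_right_fderiv, equivRealProdCLM_symm_apply]

lemma planeField_fst (F : ℂ → ℂ) :
    (fun q => (planeField F q).1) = (fun z => (F z).re) ∘ equivRealProdCLM.symm := rfl

lemma planeField_snd (F : ℂ → ℂ) :
    (fun q => (planeField F q).2) = (fun z => (F z).im) ∘ equivRealProdCLM.symm := rfl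

lemma divR_planeField (F : ℂ → ℂ) :
    divR (planeField F) = (fun z => fderiv ℝ (fun w => (F w).re) z 1 +
      fderiv ℝ (fun w => (F w).im) z I) ∘ equivRealProdCLM.symm := by
  funext p
  rw [divR, planeField_fst, planeField_snd, pd1R_comp_equivRealProd, pd2R_comp_equivRealProd]
  rfl

lemma fderiv_re_apply {G : ℂ → ℂ} {z : ℂ} (hG : DifferentiableAt ℝ G z) (v : ℂ) :
    fderiv ℝ (fun w => (G w).re) z v = (fderiv ℝ G z v).re := by
  have h : HasFDerivAt (fun w => (G w).re) (reCLM.comp (fderiv ℝ G z)) z :=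
    reCLM.hasFDerivAt.comp z hG.hasFDerivAt
  rw [h.fderiv]; rfl

lemma fderiv_im_apply {G : ℂ → ℂ} {z : ℂ} (hG : DifferentiableAt ℝ G z) (v : ℂ) :
    fderiv ℝ (fun w => (G w).im) z v = (fderiv ℝ G z v).im := by
  have h : HasFDerivAt (fun w => (G w).im) (imCLM.comp (fderiv ℝ G z)) z :=
    imCLM.hasFDerivAt.comp z hG.hasFDerivAt
  rw [h.fderiv]; rfl

lemma fderiv_real_apply_eq_mul_deriv {f : ℂ → ℂ} {z : ℂ} (hf : DifferentiableAt ℂ f z)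
    (v : ℂ) : fderiv ℝ f z v = v * deriv f z := by
  rw [hf.hasDerivAt.complexToReal_fderiv.fderiv]; simp [mul_comm]

section Iterated
variable {G : ℂ → ℂ} {S : Set ℂ} {z : ℂ}

lemma fderiv_fderiv_re_apply (hS : IsOpen S) (hG : DifferentiableOn ℝ G S) (hz : z ∈ S) {v : ℂ}
    (hG' : DifferentiableAt ℝ (fun w => fderiv ℝ G w v) z) (v' : ℂ) :
    fderiv ℝ (fun w => fderiv ℝ (fun x => (G x).re) w v) z v' =
      (fderiv ℝ (fun w => fderiv ℝ G w v) z v').re := by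
  have h : (fun w => fderiv ℝ (fun x => (G x).re) w v) =ᶠ[𝓝 z] fun w => (fderiv ℝ G w v).re :=
    eventuallyEq_of_mem (hS.mem_nhds hz) fun w hw =>
      fderiv_re_apply ((hG w hw).differentiableAt (hS.mem_nhds hw)) v
  rw [h.fderiv_eq, fderiv_re_apply hG' v']

lemma fderiv_fderiv_im_apply (hS : IsOpen S) (hG : DifferentiableOn ℝ G S) (hz : z ∈ S) {v : ℂ}
    (hG' : DifferentiableAt ℝ (fun w => fderiv ℝ G w v) z) (v' : ℂ) :
    fderiv ℝ (fun w => fderiv ℝ (fun x => (G x).im) w v) z v' =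
      (fderiv ℝ (fun w => fderiv ℝ G w v) z v').im := by
  have h : (fun w => fderiv ℝ (fun x => (G x).im) w v) =ᶠ[𝓝 z] fun w => (fderiv ℝ G w v).im :=
    eventuallyEq_of_mem (hS.mem_nhds hz) fun w hw =>
      fderiv_im_apply ((hG w hw).differentiableAt (hS.mem_nhds hw)) v
  rw [h.fderiv_eq, fderiv_im_apply hG' v']

end Iterated

noncomputable def potentialField (A B C : ℂ → ℂ) (z : ℂ) : ℂ := A z + z * conj (B z) + conj (C z)

section PotentialField
variable {A B C : ℂ → ℂ} {S : Set ℂ} {z : ℂ}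

lemma hasFDerivAt_conj_of_differentiableAt {f : ℂ → ℂ} (hf : DifferentiableAt ℂ f z) :
    HasFDerivAt (fun w => conj (f w))
      ((conjCLE : ℂ →L[ℝ] ℂ).comp (deriv f z • (1 : ℂ →L[ℝ] ℂ))) z :=
  (conjCLE : ℂ →L[ℝ] ℂ).hasFDerivAt.comp z hf.hasDerivAt.complexToReal_fderiv

lemma hasFDerivAt_potentialField (hA : DifferentiableAt ℂ A z) (hB : DifferentiableAt ℂ B z)
    (hC : DifferentiableAt ℂ C z) :
    HasFDerivAt (potentialField A B C) (deriv A z • 1 +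
      (z • (conjCLE : ℂ →L[ℝ] ℂ).comp (deriv B z • (1 : ℂ →L[ℝ] ℂ)) +
        conj (B z) • (1 : ℂ →L[ℝ] ℂ)) +
      (conjCLE : ℂ →L[ℝ] ℂ).comp (deriv C z • (1 : ℂ →L[ℝ] ℂ))) z :=
  (hA.hasDerivAt.complexToReal_fderiv.add
    ((hasFDerivAt_id z).mul (hasFDerivAt_conj_of_differentiableAt hB))).add
      (hasFDerivAt_conj_of_differentiableAt hC)

lemma fderiv_potentialField_apply (hA : DifferentiableAt ℂ A z) (hB : DifferentiableAt ℂ B z)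
    (hC : DifferentiableAt ℂ C z) (v : ℂ) :
    fderiv ℝ (potentialField A B C) z v =
      potentialField (fun w => v * deriv A w) (fun w => v * deriv B w)
        (fun w => conj v * B w + v * deriv C w) z := by
  rw [(hasFDerivAt_potentialField hA hB hC).fderiv]
  simp only [add_apply, smul_apply, one_apply_eq_self, smul_eq_mul, ContinuousLinearMap.comp_apply,
    ContinuousLinearEquiv.coe_coe, ContinuousAlgEquiv.coeCLE_apply, conjCAE_apply, map_mul,
    potentialField, map_add, RingHomCompTriple.comp_apply, RingHom.id_apply]
  ring

lemma differentiableAt_potentialField (hA : DifferentiableAt ℂ A z) (hB : DifferentiableAt ℂ B z)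
    (hC : DifferentiableAt ℂ C z) : DifferentiableAt ℝ (potentialField A B C) z :=
  (hasFDerivAt_potentialField hA hB hC).differentiableAt

lemma differentiableOn_potentialField (hS : IsOpen S) (hA : DifferentiableOn ℂ A S)
    (hB : DifferentiableOn ℂ B S) (hC : DifferentiableOn ℂ C S) :
    DifferentiableOn ℝ (potentialField A B C) S := fun _ hw =>
  (differentiableAt_potentialField (hA.differentiableAt (hS.mem_nhds hw))
    (hB.differentiableAt (hS.mem_nhds hw))
    (hC.differentiableAt (hS.mem_nhds hw))).differentiableWithinAt

lemma eqOn_fderiv_potentialField (hS : IsOpen S) (hA : DifferentiableOn ℂ A S)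
    (hB : DifferentiableOn ℂ B S) (hC : DifferentiableOn ℂ C S) (v : ℂ) :
    EqOn (fun w => fderiv ℝ (potentialField A B C) w v)
      (potentialField (fun w => v * deriv A w) (fun w => v * deriv B w)
        (fun w => conj v * B w + v * deriv C w)) S := fun _ hw =>
  fderiv_potentialField_apply (hA.differentiableAt (hS.mem_nhds hw))
    (hB.differentiableAt (hS.mem_nhds hw)) (hC.differentiableAt (hS.mem_nhds hw)) v

lemma differentiableAt_fderiv_potentialField (hS : IsOpen S) (hA : DifferentiableOn ℂ A S)
    (hB : DifferentiableOn ℂ B S) (hC : DifferentiableOn ℂ C S) (hz : z ∈ S) (v : ℂ) :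
    DifferentiableAt ℝ (fun w => fderiv ℝ (potentialField A B C) w v) z := by
  have hn := hS.mem_nhds hz
  refine (differentiableAt_potentialField ?_ ?_ ?_).congr_of_eventuallyEq
    (eventuallyEq_of_mem hn (eqOn_fderiv_potentialField hS hA hB hC v))
  · exact ((hA.deriv hS).differentiableAt hn).const_mul v
  · exact ((hB.deriv hS).differentiableAt hn).const_mul v
  · exact ((hB.differentiableAt hn).const_mul _).fun_add
      (((hC.deriv hS).differentiableAt hn).const_mul v)

lemma fderiv_fderiv_potentialField_apply (hS : IsOpen S) (hA : DifferentiableOn ℂ A S)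
    (hB : DifferentiableOn ℂ B S) (hC : DifferentiableOn ℂ C S) (hz : z ∈ S) (v : ℂ) :
    fderiv ℝ (fun w => fderiv ℝ (potentialField A B C) w v) z v =
      potentialField (fun w => v ^ 2 * deriv (deriv A) w) (fun w => v ^ 2 * deriv (deriv B) w)
        (fun w => 2 * normSq v * deriv B w + v ^ 2 * deriv (deriv C) w) z := by
  have hn := hS.mem_nhds hz
  have hA' := (hA.deriv hS).differentiableAt hn
  have hB' := (hB.deriv hS).differentiableAt hn
  have hC' := (hC.deriv hS).differentiableAt hn
  rw [(eventuallyEq_of_mem hn (eqOn_fderiv_potentialField hS hA hB hC v)).fderiv_eq,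
    fderiv_potentialField_apply (hA'.const_mul v) (hB'.const_mul v)
      (((hB.differentiableAt hn).const_mul _).fun_add (hC'.const_mul v))]
  simp only [potentialField]
  rw [deriv_const_mul _ hA', deriv_const_mul _ hB',
    deriv_fun_add ((hB.differentiableAt hn).const_mul _) (hC'.const_mul v),
    deriv_const_mul _ (hB.differentiableAt hn), deriv_const_mul _ hC']
  simp only [map_mul, map_add, map_pow, map_ofNat, conj_conj, Complex.normSq_eq_conj_mul_self]
  ring

lemma laplacian_potentialField (hS : IsOpen S) (hA : DifferentiableOn ℂ A S)
    (hB : DifferentiableOn ℂ B S) (hC : DifferentiableOn ℂ C S) (hz : z ∈ S) :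
    fderiv ℝ (fun w => fderiv ℝ (potentialField A B C) w 1) z 1 +
      fderiv ℝ (fun w => fderiv ℝ (potentialField A B C) w I) z I = 4 * conj (deriv B z) := by
  rw [fderiv_fderiv_potentialField_apply hS hA hB hC hz,
    fderiv_fderiv_potentialField_apply hS hA hB hC hz]
  simp only [potentialField, one_pow, one_mul, map_one, ofReal_one, mul_one, map_add, map_mul,
    map_ofNat, I_sq, neg_mul, map_neg, mul_neg, normSq_I]
  ring

lemma divergence_potentialField (hA : DifferentiableAt ℂ A z) (hB : DifferentiableAt ℂ B z)
    (hC : DifferentiableAt ℂ C z) :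
    fderiv ℝ (fun w => (potentialField A B C w).re) z 1 +
      fderiv ℝ (fun w => (potentialField A B C w).im) z I = 2 * (deriv A z + B z).re := by
  have hW := differentiableAt_potentialField hA hB hC
  rw [fderiv_re_apply hW, fderiv_im_apply hW, fderiv_potentialField_apply hA hB hC,
    fderiv_potentialField_apply hA hB hC]
  simp only [potentialField, one_mul, map_one, map_add, add_re, mul_re, conj_re, conj_im, mul_neg,
    sub_neg_eq_add, map_mul, conj_I, neg_mul, map_neg, neg_neg, add_im, mul_im, I_re, zero_mul, I_im,
    zero_add, neg_im, neg_zero, neg_add_rev]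
  ring

lemma fderiv_divergence_potentialField (hS : IsOpen S) (hA : DifferentiableOn ℂ A S)
    (hB : DifferentiableOn ℂ B S) (hC : DifferentiableOn ℂ C S) (hz : z ∈ S) (v : ℂ) :
    fderiv ℝ (fun w => fderiv ℝ (fun x => (potentialField A B C x).re) w 1 +
      fderiv ℝ (fun x => (potentialField A B C x).im) w I) z v =
      (v * (2 * (deriv (deriv A) z + deriv B z))).re := by
  have hn := hS.mem_nhds hz
  have hA' := (hA.deriv hS).differentiableAt hn
  have hBz := hB.differentiableAt hn
  have hH : DifferentiableAt ℂ (fun w => 2 * (deriv A w + B w)) z :=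
    (hA'.fun_add hBz).const_mul 2
  have hdiv : (fun w => fderiv ℝ (fun x => (potentialField A B C x).re) w 1 +
      fderiv ℝ (fun x => (potentialField A B C x).im) w I) =ᶠ[𝓝 z]
      fun w => (2 * (deriv A w + B w)).re := by
    filter_upwards [hn] with w hw
    have hwn := hS.mem_nhds hw
    rw [divergence_potentialField (hA.differentiableAt hwn) (hB.differentiableAt hwn)
      (hC.differentiableAt hwn)]
    simp
  rw [hdiv.fderiv_eq, fderiv_re_apply (hH.restrictScalars ℝ), fderiv_real_apply_eq_mul_deriv hH,
    deriv_const_mul _ (hA'.fun_add hBz), deriv_fun_add hA' hBz]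

end PotentialField

theorem isNavierSolutionOn_potentialField {A B C : ℂ → ℂ} {S : Set ℂ} {μ lam : ℝ}
    (hS : IsOpen S) (hA : DifferentiableOn ℂ A S) (hB : DifferentiableOn ℂ B S)
    (hC : DifferentiableOn ℂ C S)
    (hAB : ∀ z ∈ S, 2 * μ * deriv B z + (lam + μ) * (deriv (deriv A) z + deriv B z) = 0) :
    IsNavierSolutionOn μ lam (planeField (potentialField A B C))
      (equivRealProdCLM.symm ⁻¹' S) := by
  intro p hp
  simp only [planeField_fst, planeField_snd, divR_planeField, pd1R_comp_equivRealProd,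
    pd2R_comp_equivRealProd, Function.comp_apply]
  set z := equivRealProdCLM.symm p
  have hz : z ∈ S := hp
  have hW := differentiableOn_potentialField hS hA hB hC
  have hWv := differentiableAt_fderiv_potentialField hS hA hB hC hz
  have hgrad := fderiv_divergence_potentialField hS hA hB hC hz
  have hlap := laplacian_potentialField hS hA hB hC hz
  have hre := congrArg re hlap
  have him := congrArg im hlap
  have hkre := congrArg re (hAB z hz)
  have hkim := congrArg im (hAB z hz)
  rw [fderiv_fderiv_re_apply hS hW hz (hWv 1), fderiv_fderiv_re_apply hS hW hz (hWv I),
    fderiv_fderiv_im_apply hS hW hz (hWv 1), fderiv_fderiv_im_apply hS hW hz (hWv I), hgrad, hgrad]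
  simp only [add_re, mul_re, re_ofNat, conj_re, im_ofNat, conj_im, mul_neg, zero_mul, neg_zero,
    sub_zero, add_im, mul_im, add_zero, ofReal_re, ofReal_im, mul_zero, zero_re, zero_im, one_mul,
    I_re, I_im, zero_sub] at hre him hkre hkim ⊢
  exact ⟨by linear_combination μ * hre + 2 * hkre, by linear_combination μ * him - 2 * hkim⟩

theorem isNavierSolutionOn_kolosovMuskhelishvili {φ ψ : ℂ → ℂ} {S : Set ℂ} {μ lam κ : ℝ}
    (hκ : (lam + μ) * (κ - 1) = 2 * μ) (hS : IsOpen S) (hφ : DifferentiableOn ℂ φ S)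
    (hψ : DifferentiableOn ℂ ψ S) :
    IsNavierSolutionOn μ lam
      (planeField (potentialField (fun z => κ * φ z) (fun z => -deriv φ z) ψ))
      (equivRealProdCLM.symm ⁻¹' S) := by
  have hφ' := hφ.deriv hS
  refine isNavierSolutionOn_potentialField hS (hφ.const_mul _) hφ'.neg hψ fun z hz => ?_
  have hκφ : deriv (fun w => (κ : ℂ) * φ w) =ᶠ[𝓝 z] fun w => κ * deriv φ w :=
    eventuallyEq_of_mem (hS.mem_nhds hz) fun w hw =>
      deriv_const_mul _ (hφ.differentiableAt (hS.mem_nhds hw))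
  have hκ' : ((lam : ℂ) + μ) * (κ - 1) = 2 * μ := by exact_mod_cast hκ
  rw [hκφ.deriv_eq, deriv_const_mul _ (hφ'.differentiableAt (hS.mem_nhds hz)), deriv.fun_neg]
  linear_combination deriv (deriv φ) z * hκ'

section Smooth
variable {n : WithTop ℕ∞}

lemma contDiffOn_potentialField {A B C : ℂ → ℂ} {S : Set ℂ} (hS : IsOpen S)
    (hA : DifferentiableOn ℂ A S) (hB : DifferentiableOn ℂ B S) (hC : DifferentiableOn ℂ C S) :
    ContDiffOn ℝ n (potentialField A B C) S := by
  have hconj {f : ℂ → ℂ} (hf : DifferentiableOn ℂ f S) : ContDiffOn ℝ n (fun z => conj (f z)) S :=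
    (conjCLE : ℂ →L[ℝ] ℂ).contDiff.comp_contDiffOn ((hf.contDiffOn hS).restrict_scalars ℝ)
  exact (((hA.contDiffOn hS).restrict_scalars ℝ).add (contDiffOn_id.mul (hconj hB))).add (hconj hC)

lemma contDiffOn_planeField {F : ℂ → ℂ} {S : Set ℂ} (hF : ContDiffOn ℝ n F S) :
    ContDiffOn ℝ n (planeField F) (equivRealProdCLM.symm ⁻¹' S) :=
  (equivRealProdCLM : ℂ →L[ℝ] ℝ × ℝ).contDiff.comp_contDiffOn
    (hF.comp_continuousLinearMap (equivRealProdCLM.symm : ℝ × ℝ →L[ℝ] ℂ))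

end Smooth

lemma slitSet_eq_preimage : slitSet = equivRealProdCLM.symm ⁻¹' slitPlane := by
  ext p
  simp only [slitSet, not_and, not_le, mem_ofPred_eq, mem_preimage, equivRealProdCLM_symm_apply,
    mem_slitPlane_iff, add_re, ofReal_re, mul_re, I_re, mul_zero, ofReal_im, I_im, mul_one, sub_self,
    add_zero, add_im, mul_im, zero_add, ne_eq]
  tauto

lemma uphi_eqOn (κ : ℝ) (k : ℕ) :
    EqOn (uphi κ k)
      (planeField (potentialField (fun z => κ * z ^ ((k / 2 : ℝ) : ℂ))
        (fun z => -deriv (fun w => w ^ ((k / 2 : ℝ) : ℂ)) z)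
        (fun z => ((k / 2 + (-1) ^ k : ℝ) : ℂ) * z ^ ((k / 2 : ℝ) : ℂ)))) slitSet := by
  intro p hp
  rw [slitSet_eq_preimage] at hp
  set z := equivRealProdCLM.symm p with hzp
  have hz0 : z ≠ 0 := slitPlane_ne_zero hp
  have hr : 0 < ‖z‖ := norm_pos_iff.mpr hz0
  have hsqrt : Real.sqrt (p.1 ^ 2 + p.2 ^ 2) = ‖z‖ := by
    rw [norm_eq_sqrt_sq_add_sq, hzp, equivRealProdCLM_symm_apply]; simp
  have harg : (p.1 : ℂ) + p.2 * I = z := (equivRealProdCLM_symm_apply p).symm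
  set c : ℝ := k / 2 with hc
  have hderiv : deriv (fun w => w ^ (c : ℂ)) z = c * z ^ ((c - 1 : ℝ) : ℂ) := by
    rw [Complex.deriv_cpow_const hp]; push_cast; rfl
  have hrpow : ‖z‖ ^ c = ‖z‖ ^ (c - 1) * ‖z‖ := by
    rw [← Real.rpow_add_one hr.ne', sub_add_cancel]
  have hu : uphi κ k p = ‖z‖ ^ c • phik κ k (arg z) := by rw [uphi, hsqrt, harg]
  have hθ : (c - 2) * arg z = arg z * (c - 1) - arg z := by ring
  have hθ' : (k : ℝ) * arg z / 2 = arg z * c := by rw [hc]; ring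
  rw [hu, planeField, Function.comp_apply, Function.comp_apply, ← hzp]
  simp only [potentialField, hderiv, phik, hθ, hθ', Real.cos_sub, Real.sin_sub, ← hc]
  ext
  · simp only [Prod.smul_fst, smul_eq_mul, equivRealProdCLM_apply, add_re, mul_re, mul_im, neg_re,
      neg_im, conj_re, conj_im, ofReal_re, ofReal_im, cpow_ofReal_re, cpow_ofReal_im]
    rw [← norm_mul_cos_arg z, ← norm_mul_sin_arg z, hrpow]
    ring
  · simp only [Prod.smul_snd, smul_eq_mul, equivRealProdCLM_apply, add_im, mul_re, mul_im, neg_re,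
      neg_im, conj_re, conj_im, ofReal_re, ofReal_im, cpow_ofReal_re, cpow_ofReal_im]
    rw [← norm_mul_cos_arg z, ← norm_mul_sin_arg z, hrpow]
    ring

theorem stmt11_general (μ lam : ℝ) (hlm : 0 < lam + μ) (k : ℕ) :
    ContDiffOn ℝ (⊤ : ℕ∞) (uphi ((lam + 3 * μ) / (lam + μ)) k) slitSet ∧
    ∀ p ∈ slitSet,
      (μ * (pd1R (pd1R (fun q => (uphi ((lam + 3 * μ) / (lam + μ)) k q).1)) p
            + pd2R (pd2R (fun q => (uphi ((lam + 3 * μ) / (lam + μ)) k q).1)) p)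
        + (lam + μ) * pd1R (divR (uphi ((lam + 3 * μ) / (lam + μ)) k)) p = 0) ∧
      (μ * (pd1R (pd1R (fun q => (uphi ((lam + 3 * μ) / (lam + μ)) k q).2)) p
            + pd2R (pd2R (fun q => (uphi ((lam + 3 * μ) / (lam + μ)) k q).2)) p)
        + (lam + μ) * pd2R (divR (uphi ((lam + 3 * μ) / (lam + μ)) k)) p = 0) := by
  have hκ : (lam + μ) * ((lam + 3 * μ) / (lam + μ) - 1) = 2 * μ := by
    field_simp
    ring
  have hφ : DifferentiableOn ℂ (fun z : ℂ => z ^ ((k / 2 : ℝ) : ℂ)) slitPlane := fun z hz =>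
    (hasStrictDerivAt_cpow_const hz).hasDerivAt.differentiableAt.differentiableWithinAt
  have hu := uphi_eqOn ((lam + 3 * μ) / (lam + μ)) k
  rw [slitSet_eq_preimage] at hu ⊢
  exact ⟨(contDiffOn_planeField (contDiffOn_potentialField isOpen_slitPlane (hφ.const_mul _)
      (hφ.deriv isOpen_slitPlane).neg (hφ.const_mul _))).congr hu,
    (isNavierSolutionOn_kolosovMuskhelishvili hκ isOpen_slitPlane hφ (hφ.const_mul _)).congr
      hu.symm (isOpen_slitPlane.preimage equivRealProdCLM.symm.continuous)⟩

theorem stmt11 (μ lam : ℝ) (hμ : 0 < μ) (hlm : 0 < lam + μ) (k : ℕ) :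
    ContDiffOn ℝ (⊤ : ℕ∞) (uphi ((lam + 3 * μ) / (lam + μ)) k) slitSet ∧
    ∀ p ∈ slitSet,
      (μ * (pd1R (pd1R (fun q => (uphi ((lam + 3 * μ) / (lam + μ)) k q).1)) p
            + pd2R (pd2R (fun q => (uphi ((lam + 3 * μ) / (lam + μ)) k q).1)) p)
        + (lam + μ) * pd1R (divR (uphi ((lam + 3 * μ) / (lam + μ)) k)) p = 0) ∧
      (μ * (pd1R (pd1R (fun q => (uphi ((lam + 3 * μ) / (lam + μ)) k q).2)) p
            + pd2R (pd2R (fun q => (uphi ((lam + 3 * μ) / (lam + μ)) k q).2)) p)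
        + (lam + μ) * pd2R (divR (uphi ((lam + 3 * μ) / (lam + μ)) k)) p = 0) :=
  stmt11_general μ lam hlm k
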